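/- There exists a constant c > 0 depending only on d such that for every φ ∈ (0, 1] and every (2, φ)-clusterable graph G on n ≥ 3 vertices with maximum degree at most d, the i-th smallest eigenvalue λ_i of the Laplacian L = 2I − 2M satisfies λ_i ≥ φ²/(16c) for every i ≥ 3. -/

import Mathlib

open scoped RealInnerProductSpace

open scoped Classical in
/-- The lazy random walk matrix of a graph `G` with degree parameter `d`. -/
noncomputable def lazyWalk {n : ℕ} (G : SimpleGraph (Fin n)) (d : ℕ) :
    Matrix (Fin n) (Fin n) ℝ :=
  Matrix.of fun u v =>
    if u = v then 1 - ((G.neighborSet u).ncard : ℝ) / (2 * d)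
    else if G.Adj u v then 1 / (2 * d) else 0

/-- `G` has maximum degree at most `d`. -/
def MaxDegreeLE {n : ℕ} (G : SimpleGraph (Fin n)) (d : ℕ) : Prop :=
  ∀ v, (G.neighborSet v).ncard ≤ d

/-- `p_u^t`: the endpoint distribution of a length-`t` lazy random walk from `u`. -/
noncomputable def pvec {n : ℕ} (G : SimpleGraph (Fin n)) (d t : ℕ) (u : Fin n) :
    EuclideanSpace ℝ (Fin n) :=
  WithLp.toLp 2 (fun v => ((lazyWalk G d ^ t).mulVec fun w => if w = u then 1 else 0) v)

/-- `q_u^t = p_u^t - (1/n) 𝟙`. -/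
noncomputable def qvec {n : ℕ} (G : SimpleGraph (Fin n)) (d t : ℕ) (u : Fin n) :
    EuclideanSpace ℝ (Fin n) :=
  WithLp.toLp 2 (fun v => pvec G d t u v - 1 / n)

/-- `q_u^0 = 1_u - (1/n) 𝟙`. -/
noncomputable def qzero {n : ℕ} (u : Fin n) : EuclideanSpace ℝ (Fin n) :=
  WithLp.toLp 2 (fun v => (if v = u then 1 else 0) - 1 / n : Fin n → ℝ)

/-- average of `q_u^0` over `u ∈ S`. -/
noncomputable def qavg {n : ℕ} (S : Finset (Fin n)) : EuclideanSpace ℝ (Fin n) :=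
  (S.card : ℝ)⁻¹ • ∑ u ∈ S, qzero u

/-- `a` and `b` are `ε`-close to collinear. -/
def CloseCollinear {E : Type*} [NormedAddCommGroup E] [NormedSpace ℝ E]
    (ε : ℝ) (a b : E) : Prop :=
  ∃ (ea eb w : E) (s s' : ℝ),
    ‖ea‖ ≤ ε ∧ ‖eb‖ ≤ ε ∧ a + ea = s • w ∧ b + eb = s' • w

/-- `a` and `b` are `ε`-close to antipodal. -/
def CloseAntipodal {E : Type*} [NormedAddCommGroup E] [NormedSpace ℝ E]
    (ε : ℝ) (a b : E) : Prop :=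
  ∃ (ea eb w : E) (s s' : ℝ), 0 ≤ s ∧ 0 ≤ s' ∧
    ‖ea‖ ≤ ε ∧ ‖eb‖ ≤ ε ∧ a + ea = s • w ∧ b + eb = -(s' • w)

/-- `a` and `b` are `ε`-close to podal. -/
def ClosePodal {E : Type*} [NormedAddCommGroup E] [NormedSpace ℝ E]
    (ε : ℝ) (a b : E) : Prop :=
  ∃ (ea eb w : E) (s s' : ℝ), 0 ≤ s ∧ 0 ≤ s' ∧
    ‖ea‖ ≤ ε ∧ ‖eb‖ ≤ ε ∧ a + ea = s • w ∧ b + eb = s' • w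

/-- The Gram matrix `A_{u,v}` of two vectors. -/
noncomputable def gram2 {n : ℕ} (a b : EuclideanSpace ℝ (Fin n)) :
    Matrix (Fin 2) (Fin 2) ℝ :=
  !![‖a‖ ^ 2, ⟪a, b⟫; ⟪b, a⟫, ‖b‖ ^ 2]

/-- Number of edges of `G` between `S` and `C \ S` (for `S ⊆ C`). -/
noncomputable def cutEdgesIn {n : ℕ} (G : SimpleGraph (Fin n)) (C S : Finset (Fin n)) : ℕ :=
  {p : Fin n × Fin n | p.1 ∈ S ∧ p.2 ∈ C ∧ p.2 ∉ S ∧ G.Adj p.1 p.2}.ncard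

/-- Number of edges of `G` between `S` and its complement. -/
noncomputable def cutEdges {n : ℕ} (G : SimpleGraph (Fin n)) (S : Finset (Fin n)) : ℕ :=
  cutEdgesIn G Finset.univ S

/-- The cut conductance `φ_G(S) = e(S, V∖S) / (d|S|)`. -/
noncomputable def cutCond {n : ℕ} (G : SimpleGraph (Fin n)) (d : ℕ) (S : Finset (Fin n)) : ℝ :=
  (cutEdges G S : ℝ) / (d * S.card)

/-- The (inner) conductance of the induced subgraph `G[C]` is at least `φ`. -/
def InnerConductanceGE {n : ℕ} (G : SimpleGraph (Fin n)) (d : ℕ) (C : Finset (Fin n))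
    (φ : ℝ) : Prop :=
  ∀ S ⊆ C, S.Nonempty → 2 * S.card ≤ C.card →
    φ ≤ (cutEdgesIn G C S : ℝ) / (d * S.card)

/-- `G` is `(2, φ)`-clusterable. -/
def Clusterable2 {n : ℕ} (G : SimpleGraph (Fin n)) (d : ℕ) (φ : ℝ) : Prop :=
  InnerConductanceGE G d Finset.univ φ ∨
  ∃ C₁ C₂ : Finset (Fin n), C₁.Nonempty ∧ C₂.Nonempty ∧ Disjoint C₁ C₂ ∧
    C₁ ∪ C₂ = Finset.univ ∧ InnerConductanceGE G d C₁ φ ∧ InnerConductanceGE G d C₂ φ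

/-- `G` is `ε`-far from `(2, φ)`-clusterable. -/
def FarFromClusterable2 {n : ℕ} (G : SimpleGraph (Fin n)) (d : ℕ) (ε φ : ℝ) : Prop :=
  ∀ G' : SimpleGraph (Fin n), MaxDegreeLE G' d →
    ((symmDiff G.edgeSet G'.edgeSet).ncard : ℝ) ≤ ε * d * n →
    ¬ Clusterable2 G' d φ

/-- The span of the eigenvectors of `M` with eigenvalue greater than `c`. -/
noncomputable def heavySpace {n : ℕ} (M : Matrix (Fin n) (Fin n) ℝ) (c : ℝ) :
    Submodule ℝ (EuclideanSpace ℝ (Fin n)) :=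
  ⨆ μ : {μ : ℝ // c < μ}, Module.End.eigenspace (Matrix.toEuclideanLin M) (μ : ℝ)

/-- Orthogonal projection onto the span of the eigenvectors of `M` with eigenvalue
greater than `c`. -/
noncomputable def heavyProj {n : ℕ} (M : Matrix (Fin n) (Fin n) ℝ) (c : ℝ)
    (x : EuclideanSpace ℝ (Fin n)) : EuclideanSpace ℝ (Fin n) :=
  ((heavySpace M c).orthogonalProjection x : EuclideanSpace ℝ (Fin n))

/-!
By the min-max principle it suffices to show that the Rayleigh quotient of `L` is at
least `φ² / 2` on the orthogonal complement of the indicator vectors of the two clusters `C₁, C₂`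
(for `φ(G) ≥ φ` take `C₁ = V, C₂ = ∅`). A vector `f` in that complement sums to zero on each
cluster, so the Cheeger inequality inside `G[Cᵢ]` gives `∑_{u ~ v in Cᵢ} (f u - f v)² ≥ φ² d ∑_{Cᵢ} f²`,
and summing over the two clusters bounds `⟪f, L f⟫ = (1 / 2d) ∑_{u ~ v} (f u - f v)²` below by
`φ² ‖f‖² / 2`. Hence at most two eigenvalues lie below `φ² / 16`, i.e. `c = 1` works.
The Cheeger inequality is proved in the usual way: split `f` at a median into positive and
negative parts, apply the co-area inequality `2 φ d ∑ b ≤ ∑_{u ~ v} |b u - b v|` to their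
squares, and conclude by Cauchy–Schwarz.
-/

open Finset

theorem posPart_mul_negPart_eq_zero {α : Type*} [CommRing α] [LinearOrder α] [IsOrderedRing α]
    (x : α) : x⁺ * x⁻ = 0 := by
  rcases le_total 0 x with h | h <;> simp [h]

theorem sq_posPart_add_sq_negPart {α : Type*} [CommRing α] [LinearOrder α] [IsOrderedRing α]
    (x : α) : x⁺ ^ 2 + x⁻ ^ 2 = x ^ 2 := by
  conv_rhs => rw [← posPart_sub_negPart x]
  linear_combination 2 * posPart_mul_negPart_eq_zero x

theorem sq_posPart_sub_add_sq_negPart_sub_le {α : Type*} [CommRing α] [LinearOrder α]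
    [IsStrictOrderedRing α] (x y : α) : (x⁺ - y⁺) ^ 2 + (x⁻ - y⁻) ^ 2 ≤ (x - y) ^ 2 := by
  conv_rhs => rw [← posPart_sub_negPart x, ← posPart_sub_negPart y]
  nlinarith [posPart_mul_negPart_eq_zero x, posPart_mul_negPart_eq_zero y,
    mul_nonneg (posPart_nonneg x) (negPart_nonneg y),
    mul_nonneg (posPart_nonneg y) (negPart_nonneg x)]

theorem Finset.sum_sq_le_sum_sub_sq_of_sum_eq_zero {ι α : Type*} [CommRing α] [LinearOrder α]
    [IsStrictOrderedRing α] (C : Finset ι) {f : ι → α} (hf : ∑ v ∈ C, f v = 0) (M : α) :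
    ∑ v ∈ C, f v ^ 2 ≤ ∑ v ∈ C, (f v - M) ^ 2 := by
  have : ∑ v ∈ C, (f v - M) ^ 2 = ∑ v ∈ C, f v ^ 2 + C.card * M ^ 2 := by
    simp only [sub_sq, sum_add_distrib, sum_sub_distrib, ← sum_mul, ← mul_sum, hf, sum_const,
      nsmul_eq_mul]
    ring
  rw [this]
  nlinarith [sq_nonneg M]

theorem Finset.exists_median {α β : Type*} [LinearOrder β] (C : Finset α) (hC : C.Nonempty)
    (f : α → β) :
    ∃ M, 2 * (C.filter (M < f ·)).card ≤ C.card ∧ 2 * (C.filter (f · < M)).card ≤ C.card := by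
  set T := C.filter fun v => 2 * (C.filter (f · < f v)).card ≤ C.card
  have hT : T.Nonempty := by
    obtain ⟨v₀, hv₀, hmin⟩ := C.exists_min_image f hC
    refine ⟨v₀, mem_filter.2 ⟨hv₀, ?_⟩⟩
    rw [filter_false_of_mem fun w hw => not_lt.2 (hmin w hw)]
    simp
  -- the largest value `M` with few values below it also has few values above it
  obtain ⟨v₁, hv₁, hmax⟩ := T.exists_max_image f hT
  refine ⟨f v₁, ?_, (mem_filter.1 hv₁).2⟩
  by_contra! hU
  set U := C.filter (f v₁ < f ·)
  have hUne : U.Nonempty := by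
    rw [← card_pos]
    omega
  obtain ⟨v₂, hv₂, hmin⟩ := U.exists_min_image f hUne
  have hbelow : C.filter (f · < f v₂) = C.filter fun w => ¬ f v₁ < f w := by
    refine filter_congr fun w hw => ⟨fun h h' => ?_, fun h => ?_⟩
    · exact not_lt.2 (hmin w (mem_filter.2 ⟨hw, h'⟩)) h
    · exact (not_lt.1 h).trans_lt (mem_filter.1 hv₂).2
  have hcard : U.card + (C.filter fun w => ¬ f v₁ < f w).card = C.card :=
    card_filter_add_card_filter_not _
  have hv₂T : v₂ ∈ T := mem_filter.2 ⟨(mem_filter.1 hv₂).1, by rw [hbelow]; omega⟩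
  exact not_lt.2 (hmax v₂ hv₂T) (mem_filter.1 hv₂).2

theorem LinearMap.IsSymmetric.inner_map_self_le_of_mem_iSup_eigenspace
    {E : Type*} [NormedAddCommGroup E] [InnerProductSpace ℝ E] {T : E →ₗ[ℝ] E}
    (hT : T.IsSymmetric) {t : ℝ} {f : E}
    (hf : f ∈ ⨆ μ : {μ : ℝ // μ < t}, Module.End.eigenspace T μ) :
    ⟪f, T f⟫ ≤ t * ‖f‖ ^ 2 := by
  obtain ⟨c, hc, rfl⟩ := (Submodule.mem_iSup_iff_exists_finsupp _ f).1 hf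
  have hV := hT.orthogonalFamily_eigenspaces.comp (Subtype.coe_injective (p := (· < t)))
  let v : ∀ μ : {μ : ℝ // μ < t}, Module.End.eigenspace T μ := fun μ => ⟨c μ, hc μ⟩
  have hsum : c.sum (fun _ x => x) = ∑ μ ∈ c.support, (v μ : E) := rfl
  have hTsum : T (c.sum fun _ x => x) = ∑ μ ∈ c.support, ((μ : ℝ) • v μ : E) := by
    rw [hsum, map_sum]
    exact sum_congr rfl fun μ _ => Module.End.mem_eigenspace_iff.1 (hc μ)
  have hinner : ⟪∑ μ ∈ c.support, (v μ : E), ∑ μ ∈ c.support, ((μ : ℝ) • v μ : E)⟫ =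
      ∑ μ ∈ c.support, ⟪v μ, (μ : ℝ) • v μ⟫ :=
    hV.inner_sum v (fun μ => (μ : ℝ) • v μ) c.support
  have hnorm : ‖∑ μ ∈ c.support, (v μ : E)‖ ^ 2 = ∑ μ ∈ c.support, ‖v μ‖ ^ 2 :=
    hV.norm_sum v c.support
  rw [hTsum, hsum, hinner, hnorm, mul_sum]
  refine sum_le_sum fun μ _ => ?_
  rw [real_inner_smul_right, real_inner_self_eq_norm_sq]
  exact mul_le_mul_of_nonneg_right μ.2.le (sq_nonneg _)

theorem Submodule.finrank_le_finrank_of_disjoint_orthogonal {E : Type*}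
    [NormedAddCommGroup E] [InnerProductSpace ℝ E] [FiniteDimensional ℝ E]
    {U W : Submodule ℝ E} (h : Disjoint U Wᗮ) : Module.finrank ℝ U ≤ Module.finrank ℝ W := by
  have := Submodule.finrank_add_finrank_le_of_disjoint h
  rw [← W.finrank_add_finrank_orthogonal] at this
  omega

theorem EuclideanSpace.inner_indicator_eq_sum {ι : Type*} [Fintype ι] [DecidableEq ι]
    (C : Finset ι) (f : EuclideanSpace ℝ ι) :
    ⟪WithLp.toLp 2 (fun v => if v ∈ C then (1 : ℝ) else 0), f⟫ = ∑ v ∈ C, f v := by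
  simp [EuclideanSpace.inner_eq_star_dotProduct, dotProduct, sum_ite_mem]

namespace SimpleGraph

variable {V : Type*} (G : SimpleGraph V) [DecidableRel G.Adj]

/-- The ordered pairs of adjacent vertices of `C`; each edge of `G[C]` occurs twice. -/
def adjPairsIn (C : Finset V) : Finset (V × V) :=
  (C ×ˢ C).filter fun p => G.Adj p.1 p.2

variable {G}

@[simp]
theorem mem_adjPairsIn {C : Finset V} {p : V × V} :
    p ∈ G.adjPairsIn C ↔ p.1 ∈ C ∧ p.2 ∈ C ∧ G.Adj p.1 p.2 := by
  simp [adjPairsIn, and_assoc]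

theorem swap_mem_adjPairsIn {C : Finset V} {p : V × V} (hp : p ∈ G.adjPairsIn C) :
    p.swap ∈ G.adjPairsIn C := by
  obtain ⟨h₁, h₂, hadj⟩ := mem_adjPairsIn.1 hp
  exact mem_adjPairsIn.2 ⟨h₂, h₁, hadj.symm⟩

theorem sum_adjPairsIn_swap (C : Finset V) (g : V × V → ℝ) :
    ∑ p ∈ G.adjPairsIn C, g p.swap = ∑ p ∈ G.adjPairsIn C, g p :=
  sum_nbij' Prod.swap Prod.swap (fun _ => swap_mem_adjPairsIn) (fun _ => swap_mem_adjPairsIn)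
    (by simp) (by simp) (by simp)

theorem sum_adjPairsIn_univ [Fintype V] (g : V → V → ℝ) :
    ∑ p ∈ G.adjPairsIn univ, g p.1 p.2 = ∑ u, ∑ v, if G.Adj u v then g u v else 0 := by
  rw [adjPairsIn, sum_filter, univ_product_univ, ← Fintype.sum_prod_type']

theorem sum_adjPairsIn_add_le_of_disjoint [DecidableEq V] {C₁ C₂ : Finset V}
    (h : Disjoint C₁ C₂) {g : V × V → ℝ} (hg : ∀ p, 0 ≤ g p) :
    ∑ p ∈ G.adjPairsIn C₁, g p + ∑ p ∈ G.adjPairsIn C₂, g p ≤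
      ∑ p ∈ G.adjPairsIn (C₁ ∪ C₂), g p := by
  rw [← sum_union (Finset.disjoint_left.2 fun _ h₁ h₂ =>
    Finset.disjoint_left.1 h (mem_adjPairsIn.1 h₁).1 (mem_adjPairsIn.1 h₂).1)]
  refine sum_le_sum_of_subset_of_nonneg (fun p => ?_) fun p _ _ => hg p
  simp only [mem_union, mem_adjPairsIn]
  tauto

theorem sum_adjPairsIn_fst_le [Fintype V] {d : ℕ} (hdeg : ∀ v, G.degree v ≤ d) (C : Finset V)
    {h : V → ℝ} (hh : ∀ v ∈ C, 0 ≤ h v) :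
    ∑ p ∈ G.adjPairsIn C, h p.1 ≤ d * ∑ v ∈ C, h v := by
  rw [adjPairsIn, sum_filter, sum_product, mul_sum]
  refine sum_le_sum fun u hu => ?_
  rw [← sum_filter]
  dsimp only
  rw [sum_const, nsmul_eq_mul]
  refine mul_le_mul_of_nonneg_right ?_ (hh u hu)
  calc ((C.filter (G.Adj u)).card : ℝ) ≤ G.degree u := by
        rw [← card_neighborFinset_eq_degree]
        exact_mod_cast card_le_card fun v => by simp
    _ ≤ d := by exact_mod_cast hdeg u

theorem sum_adjPairsIn_add_sq_le [Fintype V] {d : ℕ} (hdeg : ∀ v, G.degree v ≤ d)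
    (C : Finset V) (ψ : V → ℝ) :
    ∑ p ∈ G.adjPairsIn C, (ψ p.1 + ψ p.2) ^ 2 ≤ 4 * d * ∑ v ∈ C, ψ v ^ 2 := by
  have hswap := sum_adjPairsIn_swap (G := G) C fun p => ψ p.1 ^ 2
  calc ∑ p ∈ G.adjPairsIn C, (ψ p.1 + ψ p.2) ^ 2
      ≤ ∑ p ∈ G.adjPairsIn C, (2 * ψ p.1 ^ 2 + 2 * ψ p.2 ^ 2) :=
        sum_le_sum fun p _ => by nlinarith [sq_nonneg (ψ p.1 - ψ p.2)]
    _ = 4 * ∑ p ∈ G.adjPairsIn C, ψ p.1 ^ 2 := by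
        rw [sum_add_distrib, ← mul_sum, ← mul_sum]
        simp only [Prod.fst_swap] at hswap
        rw [hswap]
        ring
    _ ≤ 4 * (d * ∑ v ∈ C, ψ v ^ 2) := by
        gcongr
        exact sum_adjPairsIn_fst_le hdeg C fun v _ => sq_nonneg _
    _ = _ := by ring

theorem inner_toEuclideanLin_smul_lapMatrix [Fintype V] [DecidableEq V] (c : ℝ)
    (f : EuclideanSpace ℝ V) :
    ⟪f, Matrix.toEuclideanLin (c • G.lapMatrix ℝ) f⟫ =
      c / 2 * ∑ p ∈ G.adjPairsIn univ, (f p.1 - f p.2) ^ 2 := by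
  rw [sum_adjPairsIn_univ (fun u v => (f u - f v) ^ 2), div_mul_comm, mul_comm,
    ← G.lapMatrix_toLinearMap₂' ℝ f, Matrix.toLinearMap₂'_apply']
  simp [EuclideanSpace.inner_eq_star_dotProduct, Matrix.toLpLin_apply, dotProduct_comm]

theorem isSymmetric_toEuclideanLin_smul_lapMatrix [Fintype V] [DecidableEq V] (c : ℝ) :
    (Matrix.toEuclideanLin (c • G.lapMatrix ℝ)).IsSymmetric :=
  Matrix.isSymmetric_toEuclideanLin_iff.2 ((G.isHermitian_lapMatrix ℝ).smul (IsSelfAdjoint.all c))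

end SimpleGraph

theorem MaxDegreeLE.degree_le {n d : ℕ} {G : SimpleGraph (Fin n)} [DecidableRel G.Adj]
    (h : MaxDegreeLE G d) (v : Fin n) : G.degree v ≤ d := by
  simpa [← SimpleGraph.card_neighborSet_eq_degree, Set.ncard_eq_toFinset_card'] using h v

theorem two_smul_one_sub_two_smul_lazyWalk {n : ℕ} (G : SimpleGraph (Fin n))
    [DecidableRel G.Adj] (d : ℕ) :
    (2 : ℝ) • (1 : Matrix (Fin n) (Fin n) ℝ) - (2 : ℝ) • lazyWalk G d =
      (d : ℝ)⁻¹ • G.lapMatrix ℝ := by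
  ext u v
  rcases eq_or_ne u v with rfl | huv
  · simp [lazyWalk, SimpleGraph.lapMatrix, SimpleGraph.degMatrix, Set.ncard_eq_toFinset_card',
      ← SimpleGraph.card_neighborFinset_eq_degree, SimpleGraph.neighborFinset_eq_filter]
    ring
  · by_cases hadj : G.Adj u v <;>
      simp [lazyWalk, SimpleGraph.lapMatrix, SimpleGraph.degMatrix, huv, hadj]
    ring

theorem Clusterable2.exists_partition {n d : ℕ} {G : SimpleGraph (Fin n)} {φ : ℝ}
    (h : Clusterable2 G d φ) :
    ∃ C₁ C₂ : Finset (Fin n), Disjoint C₁ C₂ ∧ C₁ ∪ C₂ = univ ∧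
      InnerConductanceGE G d C₁ φ ∧ InnerConductanceGE G d C₂ φ := by
  rcases h with h | ⟨C₁, C₂, -, -, hdisj, hunion, h₁, h₂⟩
  · refine ⟨univ, ∅, disjoint_empty_right _, union_empty _, h, fun S hS hne _ => ?_⟩
    exact absurd (subset_empty.1 hS ▸ hne) Finset.not_nonempty_empty
  · exact ⟨C₁, C₂, hdisj, hunion, h₁, h₂⟩

section Cheeger

variable {n d : ℕ} {G : SimpleGraph (Fin n)} {C : Finset (Fin n)} {φ : ℝ}

theorem InnerConductanceGE.mul_le_cutEdgesIn (h : InnerConductanceGE G d C φ)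
    {S : Finset (Fin n)} (hS : S ⊆ C) (hne : S.Nonempty) (hcard : 2 * S.card ≤ C.card) :
    φ * (d * S.card) ≤ cutEdgesIn G C S := by
  rcases Nat.eq_zero_or_pos d with rfl | hd
  · simp
  · have : (0 : ℝ) < d * S.card := by have := hne.card_pos; positivity
    exact (le_div_iff₀ this).1 (h S hS hne hcard)

variable [DecidableRel G.Adj]

theorem cutEdgesIn_eq_card_filter {S : Finset (Fin n)} (hS : S ⊆ C) :
    cutEdgesIn G C S = ((G.adjPairsIn C).filter fun p => p.1 ∈ S ∧ p.2 ∉ S).card := by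
  rw [cutEdgesIn, ← Set.ncard_coe_finset]
  congr 1
  ext p
  simp only [coe_filter, SimpleGraph.mem_adjPairsIn]
  constructor
  · rintro ⟨h₁, h₂, h₃, hadj⟩
    exact ⟨⟨hS h₁, h₂, hadj⟩, h₁, h₃⟩
  · rintro ⟨⟨-, h₂, hadj⟩, h₁, h₃⟩
    exact ⟨h₁, h₂, h₃, hadj⟩

/-- Lowering `b` by `β` on `S` removes `β` of variation from each edge of the cut `(S, C \ S)`,
once in each direction. -/
theorem sum_adjPairsIn_abs_sub_eq {b : Fin n → ℝ} {S : Finset (Fin n)} {β : ℝ} (hSC : S ⊆ C)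
    (hzero : ∀ v ∈ C, v ∉ S → b v = 0) (hβ : 0 ≤ β) (hmin : ∀ v ∈ S, β ≤ b v) :
    ∑ p ∈ G.adjPairsIn C, |b p.1 - b p.2| =
      ∑ p ∈ G.adjPairsIn C, |(if p.1 ∈ S then b p.1 - β else 0) -
        (if p.2 ∈ S then b p.2 - β else 0)| + 2 * β * cutEdgesIn G C S := by
  have hpoint : ∀ p ∈ G.adjPairsIn C, |b p.1 - b p.2| =
      |(if p.1 ∈ S then b p.1 - β else 0) - (if p.2 ∈ S then b p.2 - β else 0)| +
      β * ((if p.1 ∈ S ∧ p.2 ∉ S then 1 else 0) + (if p.2 ∈ S ∧ p.1 ∉ S then 1 else 0)) := by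
    rintro ⟨u, v⟩ hp
    obtain ⟨hu, hv, -⟩ := SimpleGraph.mem_adjPairsIn.1 hp
    dsimp only
    by_cases huS : u ∈ S <;> by_cases hvS : v ∈ S
    · simp [huS, hvS]
    · simp [hzero v hv hvS, huS, hvS, abs_of_nonneg (hβ.trans (hmin u huS)),
        abs_of_nonneg (sub_nonneg.2 (hmin u huS))]
    · simp [hzero u hu huS, huS, hvS, abs_of_nonpos (neg_nonpos.2 (hβ.trans (hmin v hvS))),
        abs_of_nonpos (sub_nonpos.2 (hmin v hvS))]
    · simp [hzero u hu huS, hzero v hv hvS, huS, hvS]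
  have hcut : (∑ p ∈ G.adjPairsIn C, if p.1 ∈ S ∧ p.2 ∉ S then (1 : ℝ) else 0) =
      cutEdgesIn G C S := by
    rw [cutEdgesIn_eq_card_filter hSC, sum_boole]
  have hcut' : (∑ p ∈ G.adjPairsIn C, if p.2 ∈ S ∧ p.1 ∉ S then (1 : ℝ) else 0) =
      cutEdgesIn G C S :=
    (SimpleGraph.sum_adjPairsIn_swap C fun p => if p.1 ∈ S ∧ p.2 ∉ S then (1 : ℝ) else 0).trans
      hcut
  rw [sum_congr rfl hpoint, sum_add_distrib, ← mul_sum, sum_add_distrib, hcut, hcut']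
  ring

/-- The co-area inequality, proved by peeling off the lowest level set of `b`. -/
theorem InnerConductanceGE.two_mul_sum_le_sum_adjPairsIn_abs_sub
    (hC : InnerConductanceGE G d C φ) (b : Fin n → ℝ) (hb : ∀ v ∈ C, 0 ≤ b v)
    (hsupp : 2 * (C.filter (0 < b ·)).card ≤ C.card) :
    2 * φ * d * ∑ v ∈ C, b v ≤ ∑ p ∈ G.adjPairsIn C, |b p.1 - b p.2| := by
  induction hk : (C.filter (0 < b ·)).card using Nat.strong_induction_on generalizing b with
  | _ k IH =>
  set S := C.filter (0 < b ·)
  have hSC : S ⊆ C := filter_subset _ _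
  have hzero : ∀ v ∈ C, v ∉ S → b v = 0 := fun v hv hvS =>
    le_antisymm (not_lt.1 fun h => hvS (mem_filter.2 ⟨hv, h⟩)) (hb v hv)
  rcases S.eq_empty_or_nonempty with hS | hS
  · rw [sum_eq_zero fun v hv => hzero v hv (hS ▸ notMem_empty v), mul_zero]
    exact sum_nonneg fun p _ => abs_nonneg _
  obtain ⟨v₀, hv₀, hmin⟩ := S.exists_min_image b hS
  set β := b v₀
  have hβ : 0 < β := (mem_filter.1 hv₀).2
  set b' : Fin n → ℝ := fun v => if v ∈ S then b v - β else 0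
  have hsupp' : C.filter (0 < b' ·) ⊆ S.erase v₀ := by
    intro v hv
    obtain ⟨-, hpos⟩ := mem_filter.1 hv
    by_cases hvS : v ∈ S
    · refine mem_erase.2 ⟨?_, hvS⟩
      rintro rfl
      simp [b', hvS, β] at hpos
    · simp [b', hvS] at hpos
  have IH' := IH _ (hk ▸ (card_le_card hsupp').trans_lt (card_erase_lt_of_mem hv₀)) b'
    (fun v _ => by by_cases hvS : v ∈ S <;> simp [b', hvS, hmin v])
    ((Nat.mul_le_mul_left 2 ((card_le_card hsupp').trans card_erase_le)).trans hsupp) rfl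
  have hsum : ∑ v ∈ C, b v = ∑ v ∈ C, b' v + β * S.card := by
    rw [← sum_subset hSC fun v hv hvS => hzero v hv hvS,
      ← sum_subset hSC fun v _ hvS => if_neg hvS, sum_congr rfl fun v hv => if_pos hv,
      sum_sub_distrib, sum_const, nsmul_eq_mul]
    ring
  rw [sum_adjPairsIn_abs_sub_eq hSC hzero hβ.le hmin, hsum]
  have := hC.mul_le_cutEdgesIn hSC hS (hk ▸ hsupp)
  nlinarith

theorem InnerConductanceGE.sq_mul_sum_sq_le_sum_adjPairsIn_of_nonneg
    (hC : InnerConductanceGE G d C φ) (hdeg : ∀ v, G.degree v ≤ d) (hφ : 0 ≤ φ)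
    (ψ : Fin n → ℝ) (hψ : ∀ v ∈ C, 0 ≤ ψ v) (hsupp : 2 * (C.filter (0 < ψ ·)).card ≤ C.card) :
    φ ^ 2 * d * ∑ v ∈ C, ψ v ^ 2 ≤ ∑ p ∈ G.adjPairsIn C, (ψ p.1 - ψ p.2) ^ 2 := by
  set N := ∑ v ∈ C, ψ v ^ 2
  set E := ∑ p ∈ G.adjPairsIn C, (ψ p.1 - ψ p.2) ^ 2
  set A := ∑ p ∈ G.adjPairsIn C, |ψ p.1 ^ 2 - ψ p.2 ^ 2|
  have hA : 2 * φ * d * N ≤ A := by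
    have hsupp_sq : C.filter (fun v => 0 < ψ v ^ 2) = C.filter (0 < ψ ·) := filter_congr
      fun v hv => by rw [(sq_nonneg _).lt_iff_ne', (hψ v hv).lt_iff_ne', pow_ne_zero_iff two_ne_zero]
    exact hC.two_mul_sum_le_sum_adjPairsIn_abs_sub _ (fun v _ => sq_nonneg _) (hsupp_sq ▸ hsupp)
  have hCS : A ^ 2 ≤ E * ∑ p ∈ G.adjPairsIn C, (ψ p.1 + ψ p.2) ^ 2 := by
    have : A = ∑ p ∈ G.adjPairsIn C, |ψ p.1 - ψ p.2| * (ψ p.1 + ψ p.2) := by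
      refine sum_congr rfl fun p hp => ?_
      obtain ⟨h₁, h₂, -⟩ := SimpleGraph.mem_adjPairsIn.1 hp
      rw [sq_sub_sq, abs_mul, abs_of_nonneg (add_nonneg (hψ _ h₁) (hψ _ h₂)), mul_comm]
    rw [this]
    simpa only [sq_abs] using sum_mul_sq_le_sq_mul_sq (G.adjPairsIn C)
      (fun p => |ψ p.1 - ψ p.2|) fun p => ψ p.1 + ψ p.2
  have hN : 0 ≤ d * N := by positivity
  have hE : 0 ≤ E := by positivity
  have key : (2 * φ * d * N) ^ 2 ≤ E * (4 * d * N) :=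
    calc (2 * φ * d * N) ^ 2 ≤ A ^ 2 := pow_le_pow_left₀ (by positivity) hA 2
      _ ≤ _ := hCS.trans (mul_le_mul_of_nonneg_left
        (SimpleGraph.sum_adjPairsIn_add_sq_le hdeg C ψ) hE)
  rcases hN.eq_or_lt with h | h
  · rw [mul_assoc, ← h, mul_zero]
    exact hE
  · nlinarith

theorem InnerConductanceGE.sq_mul_sum_sq_le_sum_adjPairsIn (hC : InnerConductanceGE G d C φ)
    (hdeg : ∀ v, G.degree v ≤ d) (hφ : 0 ≤ φ) (f : Fin n → ℝ) (hf : ∑ v ∈ C, f v = 0) :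
    φ ^ 2 * d * ∑ v ∈ C, f v ^ 2 ≤ ∑ p ∈ G.adjPairsIn C, (f p.1 - f p.2) ^ 2 := by
  rcases C.eq_empty_or_nonempty with rfl | hCne
  · simp [SimpleGraph.adjPairsIn]
  obtain ⟨M, hM₁, hM₂⟩ := C.exists_median hCne f
  have hpos := hC.sq_mul_sum_sq_le_sum_adjPairsIn_of_nonneg hdeg hφ (fun v => (f v - M)⁺)
    (fun v _ => posPart_nonneg _) (by simpa only [posPart_pos_iff, sub_pos] using hM₁)
  have hneg := hC.sq_mul_sum_sq_le_sum_adjPairsIn_of_nonneg hdeg hφ (fun v => (f v - M)⁻)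
    (fun v _ => negPart_nonneg _) (by simpa only [negPart_pos_iff, sub_neg] using hM₂)
  calc φ ^ 2 * d * ∑ v ∈ C, f v ^ 2 ≤ φ ^ 2 * d * ∑ v ∈ C, (f v - M) ^ 2 :=
        mul_le_mul_of_nonneg_left (C.sum_sq_le_sum_sub_sq_of_sum_eq_zero hf M) (by positivity)
    _ = φ ^ 2 * d * ∑ v ∈ C, (f v - M)⁺ ^ 2 + φ ^ 2 * d * ∑ v ∈ C, (f v - M)⁻ ^ 2 := by
        simp only [← mul_add, ← sum_add_distrib, sq_posPart_add_sq_negPart]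
    _ ≤ ∑ p ∈ G.adjPairsIn C, (((f p.1 - M)⁺ - (f p.2 - M)⁺) ^ 2 +
          ((f p.1 - M)⁻ - (f p.2 - M)⁻) ^ 2) := by
        rw [sum_add_distrib]
        exact add_le_add hpos hneg
    _ ≤ ∑ p ∈ G.adjPairsIn C, (f p.1 - f p.2) ^ 2 := sum_le_sum fun p _ => by
        simpa using sq_posPart_sub_add_sq_negPart_sub_le (f p.1 - M) (f p.2 - M)

theorem sq_div_two_mul_norm_sq_le_inner_lapMatrix {C₁ C₂ : Finset (Fin n)} (hd : 0 < d)
    (hdeg : ∀ v, G.degree v ≤ d) (hφ : 0 ≤ φ) (hdisj : Disjoint C₁ C₂)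
    (hunion : C₁ ∪ C₂ = univ) (h₁ : InnerConductanceGE G d C₁ φ)
    (h₂ : InnerConductanceGE G d C₂ φ) (f : EuclideanSpace ℝ (Fin n))
    (hf₁ : ∑ v ∈ C₁, f v = 0) (hf₂ : ∑ v ∈ C₂, f v = 0) :
    φ ^ 2 / 2 * ‖f‖ ^ 2 ≤ ⟪f, Matrix.toEuclideanLin ((d : ℝ)⁻¹ • G.lapMatrix ℝ) f⟫ := by
  have hnorm : ‖f‖ ^ 2 = ∑ v ∈ C₁, f v ^ 2 + ∑ v ∈ C₂, f v ^ 2 := by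
    rw [← sum_union hdisj, hunion, EuclideanSpace.norm_sq_eq]
    simp only [Real.norm_eq_abs, sq_abs]
  have hc : (0 : ℝ) ≤ (d : ℝ)⁻¹ / 2 := by positivity
  rw [SimpleGraph.inner_toEuclideanLin_smul_lapMatrix, ← hunion]
  calc φ ^ 2 / 2 * ‖f‖ ^ 2
      = (d : ℝ)⁻¹ / 2 * (φ ^ 2 * d * ∑ v ∈ C₁, f v ^ 2 + φ ^ 2 * d * ∑ v ∈ C₂, f v ^ 2) := by
        rw [hnorm]
        field_simp
    _ ≤ (d : ℝ)⁻¹ / 2 * (∑ p ∈ G.adjPairsIn C₁, (f p.1 - f p.2) ^ 2 +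
          ∑ p ∈ G.adjPairsIn C₂, (f p.1 - f p.2) ^ 2) :=
        mul_le_mul_of_nonneg_left (add_le_add (h₁.sq_mul_sum_sq_le_sum_adjPairsIn hdeg hφ f hf₁)
          (h₂.sq_mul_sum_sq_le_sum_adjPairsIn hdeg hφ f hf₂)) hc
    _ ≤ _ := mul_le_mul_of_nonneg_left
        (SimpleGraph.sum_adjPairsIn_add_le_of_disjoint hdisj fun _ => sq_nonneg _) hc

end Cheeger

theorem stmt3 (d : ℕ) (hd : 1 ≤ d) :
    ∃ c : ℝ, 0 < c ∧ ∀ (φ : ℝ), 0 < φ → φ ≤ 1 →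
      ∀ (n : ℕ), 3 ≤ n → ∀ G : SimpleGraph (Fin n), MaxDegreeLE G d →
        Clusterable2 G d φ →
        Module.finrank ℝ
          ↥(⨆ μ : {μ : ℝ // μ < φ ^ 2 / (16 * c)},
            Module.End.eigenspace
              (Matrix.toEuclideanLin
                ((2 : ℝ) • (1 : Matrix (Fin n) (Fin n) ℝ) - (2 : ℝ) • lazyWalk G d))
              (μ : ℝ)) ≤ 2 := by
  classical
  refine ⟨1, one_pos, fun φ hφ _ n _ G hdeg hclus => ?_⟩
  obtain ⟨C₁, C₂, hdisj, hunion, h₁, h₂⟩ := hclus.exists_partition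
  let x : Finset (Fin n) → EuclideanSpace ℝ (Fin n) :=
    fun C => WithLp.toLp 2 fun v => if v ∈ C then 1 else 0
  set W := Submodule.span ℝ {x C₁, x C₂}
  have hW : Module.finrank ℝ W ≤ 2 := (finrank_span_le_card _).trans (by simpa using card_le_two)
  rw [two_smul_one_sub_two_smul_lazyWalk]
  refine (Submodule.finrank_le_finrank_of_disjoint_orthogonal ?_).trans hW
  refine Submodule.disjoint_def.2 fun f hfE hfW => ?_
  have hf : ∀ C, x C ∈ W → ∑ v ∈ C, f v = 0 := fun C hC => by
    rw [← EuclideanSpace.inner_indicator_eq_sum]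
    exact (Submodule.mem_orthogonal _ f).1 hfW _ hC
  have hlow := sq_div_two_mul_norm_sq_le_inner_lapMatrix hd hdeg.degree_le hφ.le hdisj hunion
    h₁ h₂ f (hf C₁ (Submodule.subset_span (by simp))) (hf C₂ (Submodule.subset_span (by simp)))
  have hup := (SimpleGraph.isSymmetric_toEuclideanLin_smul_lapMatrix (G := G)
    (d : ℝ)⁻¹).inner_map_self_le_of_mem_iSup_eigenspace hfE
  by_contra hf0
  have := norm_pos_iff.2 hf0
  nlinarith [pow_pos hφ 2, pow_pos this 2]
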